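/- arXiv:2207.05989 — 5 statements merged into one kernel-verified Lean document; each statement's English description precedes it below -/
import Mathlib

section
/- For any absolutely continuous function f : [0,1] → ℝ satisfying ∫₀¹ y(1-y)|f'(y)|² dy < ∞, one has ∫₀¹ |f(y) - ∫₀¹ f(z) dz|² dy ≤ (1/2) ∫₀¹ y(1-y)|f'(y)|² dy. -/
/-!
Since `2 Var f = ∫∫ (f y - f z)² dy dz` and, by Cauchy–Schwarz,
`(f z - f y)² = (∫_y^z f')² ≤ |z - y| ∫_{Ι y z} f'²`, Tonelli bounds `2 Var f` by
`∫ κ(t) f'(t)² dt` with `κ(t) = ∫∫ |z - y| 1[t ∈ Ι y z] dy dz`, and on `(0, 1]` this kernel is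
exactly `t (1 - t)`. Working with `∫⁻` makes the exchange of integrals legitimate although
`f'²` need not be integrable near the endpoints.
-/

open MeasureTheory Set ProbabilityTheory
open scoped ENNReal Interval

section Variance

variable {Ω : Type*} [MeasurableSpace Ω] {μ : Measure Ω} [IsProbabilityMeasure μ] {X : Ω → ℝ}

theorem integral_const_sub_sq (hX : MemLp X 2 μ) (a : ℝ) :
    ∫ y, (a - X y) ^ 2 ∂μ = Var[X; μ] + (a - μ[X]) ^ 2 := by
  have h := variance_eq_sub (X := fun y => a - X y) ((memLp_const a).sub hX)
  rw [variance_const_sub hX.aestronglyMeasurable, integral_sub (integrable_const a)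
    (hX.integrable one_le_two), integral_const] at h
  simp only [probReal_univ, smul_eq_mul, one_mul, Pi.pow_apply] at h
  linarith

theorem lintegral_lintegral_ofReal_sub_sq (hX : MemLp X 2 μ) :
    ∫⁻ x, ∫⁻ y, ENNReal.ofReal ((X x - X y) ^ 2) ∂μ ∂μ = ENNReal.ofReal (2 * Var[X; μ]) := by
  have hsq : ∀ a, Integrable (fun y => (a - X y) ^ 2) μ := fun a =>
    MemLp.integrable_sq (f := fun y => a - X y) ((memLp_const a).sub hX)
  have hdev : Integrable (fun x => (X x - μ[X]) ^ 2) μ :=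
    MemLp.integrable_sq (f := fun x => X x - μ[X]) (hX.sub (memLp_const _))
  calc ∫⁻ x, ∫⁻ y, ENNReal.ofReal ((X x - X y) ^ 2) ∂μ ∂μ
      = ∫⁻ x, ENNReal.ofReal (Var[X; μ] + (X x - μ[X]) ^ 2) ∂μ := by
        refine lintegral_congr fun x => ?_
        rw [← integral_const_sub_sq hX, ofReal_integral_eq_lintegral_ofReal (hsq _)
          (.of_forall fun _ => sq_nonneg _)]
    _ = ENNReal.ofReal (∫ x, Var[X; μ] + (X x - μ[X]) ^ 2 ∂μ) :=
        (ofReal_integral_eq_lintegral_ofReal ((integrable_const _).add hdev)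
          (.of_forall fun _ => add_nonneg (variance_nonneg _ _) (sq_nonneg _))).symm
    _ = ENNReal.ofReal (2 * Var[X; μ]) := by
        rw [integral_add (integrable_const _) hdev, integral_const,
          ← variance_eq_integral hX.aemeasurable, probReal_univ, one_smul, two_mul]

end Variance

theorem ofReal_sq_integral_le {α : Type*} [MeasurableSpace α] (μ : Measure α) {g : α → ℝ}
    (hg : AEMeasurable g μ) :
    ENNReal.ofReal ((∫ x, g x ∂μ) ^ 2) ≤ μ univ * ∫⁻ x, ENNReal.ofReal (g x ^ 2) ∂μ := by
  have hsq (r : ℝ) : ENNReal.ofReal (r ^ 2) = ‖r‖ₑ ^ 2 := by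
    rw [← enorm_pow, Real.enorm_of_nonneg (sq_nonneg _)]
  have holder :=
    ENNReal.lintegral_mul_le_Lp_mul_Lq μ .two_two (aemeasurable_const (b := 1)) hg.enorm
  simp only [Pi.mul_apply, one_mul, lintegral_const, ENNReal.rpow_two, one_pow] at holder
  calc ENNReal.ofReal ((∫ x, g x ∂μ) ^ 2) = ‖∫ x, g x ∂μ‖ₑ ^ 2 := hsq _
    _ ≤ (∫⁻ x, ‖g x‖ₑ ∂μ) ^ 2 := by gcongr; exact enorm_integral_le_lintegral_enorm _
    _ ≤ (μ univ ^ (1 / 2 : ℝ) * (∫⁻ x, ‖g x‖ₑ ^ 2 ∂μ) ^ (1 / 2 : ℝ)) ^ 2 := by gcongr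
    _ = μ univ * ∫⁻ x, ENNReal.ofReal (g x ^ 2) ∂μ := by
        simp_rw [hsq, mul_pow, ← ENNReal.rpow_natCast, ← ENNReal.rpow_mul]
        norm_num

theorem ofReal_sq_intervalIntegral_le {g : ℝ → ℝ} {a b : ℝ}
    (hg : AEMeasurable g (volume.restrict (Ι a b))) :
    ENNReal.ofReal ((∫ t in a..b, g t) ^ 2)
      ≤ ENNReal.ofReal |b - a| * ∫⁻ t in Ι a b, ENNReal.ofReal (g t ^ 2) := by
  have h := ofReal_sq_integral_le _ hg
  rwa [Measure.restrict_apply_univ, Real.volume_uIoc, ← sq_abs, ← Real.norm_eq_abs,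
    ← intervalIntegral.norm_integral_eq_norm_integral_uIoc, Real.norm_eq_abs, sq_abs] at h

theorem measurable_indicator_uIoc {α : Type*} [MeasurableSpace α] {y z t : α → ℝ}
    (hy : Measurable y) (hz : Measurable z) (ht : Measurable t) :
    Measurable fun p => (Ι (y p) (z p)).indicator (fun _ => ENNReal.ofReal |z p - y p|) (t p) := by
  simp only [indicator_apply, uIoc, mem_Ioc]
  exact Measurable.ite ((measurableSet_lt (hy.min hz) ht).inter (measurableSet_le ht (hy.max hz)))
    (by fun_prop) measurable_const

noncomputable def uIocKernel (s : Set ℝ) (t : ℝ) : ℝ≥0∞ :=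
  ∫⁻ y in s, ∫⁻ z in s, (Ι y z).indicator (fun _ => ENNReal.ofReal |z - y|) t

theorem lintegral_lintegral_mul_lintegral_uIoc {s : Set ℝ} (hs : MeasurableSet s)
    (hs' : s.OrdConnected) {G : ℝ → ℝ≥0∞} (hG : AEMeasurable G (volume.restrict s)) :
    ∫⁻ y in s, ∫⁻ z in s, ENNReal.ofReal |z - y| * ∫⁻ t in Ι y z, G t
      = ∫⁻ t in s, uIocKernel s t * G t := by
  set F : ℝ → ℝ → ℝ → ℝ≥0∞ := fun y z t => (Ι y z).indicator (fun _ => ENNReal.ofReal |z - y|) t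
  have hF_zt (y : ℝ) : Measurable fun p : ℝ × ℝ => F y p.1 p.2 :=
    measurable_indicator_uIoc measurable_const measurable_fst measurable_snd
  have hF_yt : Measurable fun p : ℝ × ℝ => ∫⁻ z in s, F p.1 z p.2 :=
    (measurable_indicator_uIoc measurable_fst.fst measurable_snd
      measurable_fst.snd).lintegral_prod_right'
  calc ∫⁻ y in s, ∫⁻ z in s, ENNReal.ofReal |z - y| * ∫⁻ t in Ι y z, G t
      = ∫⁻ y in s, ∫⁻ z in s, ∫⁻ t in s, F y z t * G t := by
        refine setLIntegral_congr_fun hs fun y hy => setLIntegral_congr_fun hs fun z hz => ?_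
        simp only [F, ← indicator_mul_left, lintegral_indicator measurableSet_uIoc,
          Measure.restrict_restrict measurableSet_uIoc, inter_eq_left.2 (hs'.uIoc_subset hy hz),
          lintegral_const_mul' _ _ ENNReal.ofReal_ne_top]
    _ = ∫⁻ y in s, ∫⁻ t in s, ∫⁻ z in s, F y z t * G t := by
        refine lintegral_congr fun y => lintegral_lintegral_swap ?_
        exact (hF_zt y).aemeasurable.mul hG.comp_snd
    _ = ∫⁻ y in s, ∫⁻ t in s, G t * ∫⁻ z in s, F y z t := by
        refine lintegral_congr fun y => lintegral_congr fun t => ?_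
        rw [lintegral_mul_const _ (f := fun z => F y z t) ((hF_zt y).comp measurable_prodMk_right),
          mul_comm]
    _ = ∫⁻ t in s, ∫⁻ y in s, G t * ∫⁻ z in s, F y z t :=
        lintegral_lintegral_swap (hG.comp_snd.mul hF_yt.aemeasurable)
    _ = ∫⁻ t in s, uIocKernel s t * G t := by
        refine lintegral_congr fun t => ?_
        rw [lintegral_const_mul _ (f := fun y => ∫⁻ z in s, F y z t)
          (hF_yt.comp measurable_prodMk_right), mul_comm]
        rfl

theorem setLIntegral_Icc_ofReal {φ : ℝ → ℝ} {a b : ℝ} (hab : a ≤ b) (hφ : Continuous φ)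
    (hφ_nonneg : ∀ x ∈ Icc a b, 0 ≤ φ x) :
    ∫⁻ x in Icc a b, ENNReal.ofReal (φ x) = ENNReal.ofReal (∫ x in a..b, φ x) := by
  rw [intervalIntegral.integral_of_le hab, ← integral_Icc_eq_integral_Ioc,
    ofReal_integral_eq_lintegral_ofReal hφ.integrableOn_Icc
      ((ae_restrict_mem measurableSet_Icc).mono hφ_nonneg)]

theorem setLIntegral_Ioc_eq_Ioo_add_Icc {a b c : ℝ} (hab : a < b) (hbc : b ≤ c) (φ : ℝ → ℝ≥0∞) :
    ∫⁻ x in Ioc a c, φ x = (∫⁻ x in Ioo a b, φ x) + ∫⁻ x in Icc b c, φ x := by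
  rw [← Ioo_union_Icc_eq_Ioc hab hbc, lintegral_union measurableSet_Icc
    (disjoint_left.2 fun x hx hx' => hx.2.not_ge hx'.1)]

theorem lintegral_Ioc_zero_one_indicator_uIoc_of_lt {y t : ℝ} (hyt : y < t)
    (ht : t ∈ Ioc (0 : ℝ) 1) :
    ∫⁻ z in Ioc 0 1, (Ι y z).indicator (fun _ => ENNReal.ofReal |z - y|) t
      = ENNReal.ofReal ((1 - t ^ 2) / 2 - (1 - t) * y) := by
  have h_below : ∫⁻ z in Ioo 0 t, (Ι y z).indicator (fun _ => ENNReal.ofReal |z - y|) t = 0 := by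
    refine (setLIntegral_congr_fun measurableSet_Ioo fun z hz => ?_).trans lintegral_zero
    refine indicator_of_notMem ?_ _
    rw [mem_uIoc]
    exact fun h => h.elim (fun h => hz.2.not_ge h.2) (fun h => hyt.not_ge h.2)
  have h_above : ∫⁻ z in Icc t 1, (Ι y z).indicator (fun _ => ENNReal.ofReal |z - y|) t
      = ∫⁻ z in Icc t 1, ENNReal.ofReal (z - y) := by
    refine setLIntegral_congr_fun measurableSet_Icc fun z hz => ?_
    rw [indicator_of_mem (mem_uIoc.2 (.inl ⟨hyt, hz.1⟩)), abs_of_pos (by linarith [hz.1])]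
  rw [setLIntegral_Ioc_eq_Ioo_add_Icc ht.1 ht.2, h_below, h_above, zero_add,
    setLIntegral_Icc_ofReal ht.2 (by fun_prop) fun z hz => by linarith [hz.1],
    intervalIntegral.integral_comp_sub_right fun z => z, integral_id]
  congr 1
  ring

theorem lintegral_Ioc_zero_one_indicator_uIoc_of_ge {y t : ℝ} (hty : t ≤ y)
    (ht : t ∈ Ioc (0 : ℝ) 1) :
    ∫⁻ z in Ioc 0 1, (Ι y z).indicator (fun _ => ENNReal.ofReal |z - y|) t
      = ENNReal.ofReal (t * y - t ^ 2 / 2) := by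
  have h_below : ∫⁻ z in Ioo 0 t, (Ι y z).indicator (fun _ => ENNReal.ofReal |z - y|) t
      = ∫⁻ z in Icc 0 t, ENNReal.ofReal (y - z) := by
    refine (setLIntegral_congr_fun measurableSet_Ioo fun z hz => ?_).trans
      (setLIntegral_congr Ioo_ae_eq_Icc)
    rw [indicator_of_mem (mem_uIoc.2 (.inr ⟨hz.2, hty⟩)), abs_of_neg (by linarith [hz.2]), neg_sub]
  have h_above : ∫⁻ z in Icc t 1, (Ι y z).indicator (fun _ => ENNReal.ofReal |z - y|) t = 0 := by
    refine (setLIntegral_congr_fun measurableSet_Icc fun z hz => ?_).trans lintegral_zero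
    refine indicator_of_notMem ?_ _
    rw [mem_uIoc]
    exact fun h => h.elim (fun h => h.1.not_ge hty) (fun h => h.1.not_ge hz.1)
  rw [setLIntegral_Ioc_eq_Ioo_add_Icc ht.1 ht.2, h_below, h_above, add_zero,
    setLIntegral_Icc_ofReal ht.1.le (by fun_prop) fun z hz => by linarith [hz.2],
    intervalIntegral.integral_comp_sub_left fun z => z, integral_id]
  congr 1
  ring

theorem uIocKernel_Ioc_zero_one {t : ℝ} (ht : t ∈ Ioc (0 : ℝ) 1) :
    uIocKernel (Ioc 0 1) t = ENNReal.ofReal (t * (1 - t)) := by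
  have h_left : ∫ y in (0 : ℝ)..t, ((1 - t ^ 2) / 2 - (1 - t) * y) = t * (1 - t) / 2 := by
    rw [intervalIntegral.integral_sub intervalIntegrable_const
      (intervalIntegral.intervalIntegrable_id.const_mul _), intervalIntegral.integral_const,
      intervalIntegral.integral_const_mul, integral_id, smul_eq_mul]
    ring
  have h_right : ∫ y in t..1, (t * y - t ^ 2 / 2) = t * (1 - t) / 2 := by
    rw [intervalIntegral.integral_sub (intervalIntegral.intervalIntegrable_id.const_mul _)
      intervalIntegrable_const, intervalIntegral.integral_const,
      intervalIntegral.integral_const_mul, integral_id, smul_eq_mul]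
    ring
  rw [uIocKernel, setLIntegral_Ioc_eq_Ioo_add_Icc ht.1 ht.2,
    setLIntegral_congr_fun measurableSet_Ioo fun y hy =>
      lintegral_Ioc_zero_one_indicator_uIoc_of_lt hy.2 ht,
    setLIntegral_congr_fun measurableSet_Icc fun y hy =>
      lintegral_Ioc_zero_one_indicator_uIoc_of_ge hy.1 ht,
    setLIntegral_congr Ioo_ae_eq_Icc,
    setLIntegral_Icc_ofReal ht.1.le (by fun_prop) fun y hy => by nlinarith [hy.2, ht.2],
    setLIntegral_Icc_ofReal ht.2 (by fun_prop) fun y hy => by nlinarith [hy.1, ht.1],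
    h_left, h_right, ← ENNReal.ofReal_add (by nlinarith [ht.1, ht.2]) (by nlinarith [ht.1, ht.2])]
  congr 1
  ring

theorem lintegral_lintegral_ofReal_sq_sub_le {s : Set ℝ} (hs : MeasurableSet s)
    (hs' : s.OrdConnected) {f f' : ℝ → ℝ} (hf' : AEMeasurable f' (volume.restrict s))
    (hdiff : ∀ y ∈ s, ∀ z ∈ s, f z - f y = ∫ t in y..z, f' t) :
    ∫⁻ y in s, ∫⁻ z in s, ENNReal.ofReal ((f y - f z) ^ 2)
      ≤ ∫⁻ t in s, uIocKernel s t * ENNReal.ofReal (f' t ^ 2) := by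
  calc ∫⁻ y in s, ∫⁻ z in s, ENNReal.ofReal ((f y - f z) ^ 2)
      ≤ ∫⁻ y in s, ∫⁻ z in s,
          ENNReal.ofReal |z - y| * ∫⁻ t in Ι y z, ENNReal.ofReal (f' t ^ 2) := by
        refine setLIntegral_mono' hs fun y hy => setLIntegral_mono' hs fun z hz => ?_
        rw [← neg_sub, neg_sq, hdiff y hy z hz]
        exact ofReal_sq_intervalIntegral_le
          (hf'.mono_measure (Measure.restrict_mono (hs'.uIoc_subset hy hz) le_rfl))
    _ = ∫⁻ t in s, uIocKernel s t * ENNReal.ofReal (f' t ^ 2) :=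
        lintegral_lintegral_mul_lintegral_uIoc hs hs' (hf'.pow_const 2).ennreal_ofReal

theorem sub_eq_intervalIntegral_of_eq_add_integral {f f' : ℝ → ℝ} {a b : ℝ}
    (hAC : ∀ x ∈ Icc a b, f x = f a + ∫ t in a..x, f' t) (hint : IntervalIntegrable f' volume a b)
    {y z : ℝ} (hy : y ∈ Icc a b) (hz : z ∈ Icc a b) :
    f z - f y = ∫ t in y..z, f' t := by
  have hsub {x : ℝ} (hx : x ∈ Icc a b) : IntervalIntegrable f' volume a x :=
    hint.mono_set (uIcc_subset_uIcc left_mem_uIcc (mem_uIcc_of_le hx.1 hx.2))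
  rw [hAC z hz, hAC y hy, add_sub_add_left_eq_sub,
    intervalIntegral.integral_interval_sub_left (hsub hz) (hsub hy)]

theorem continuousOn_of_eq_add_integral {f f' : ℝ → ℝ} {a b : ℝ} (hab : a ≤ b)
    (hAC : ∀ x ∈ Icc a b, f x = f a + ∫ t in a..x, f' t) (hint : IntervalIntegrable f' volume a b) :
    ContinuousOn f (Icc a b) := by
  have h := intervalIntegral.continuousOn_primitive_interval' hint left_mem_uIcc
  rw [uIcc_of_le hab] at h
  exact (continuousOn_const.add h).congr hAC

instance : IsProbabilityMeasure (volume.restrict (Ioc (0 : ℝ) 1)) := ⟨by simp⟩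

theorem ofReal_two_mul_variance_le {f f' : ℝ → ℝ} (hf : MemLp f 2 (volume.restrict (Ioc 0 1)))
    (hf' : AEMeasurable f' (volume.restrict (Ioc 0 1)))
    (hdiff : ∀ y ∈ Ioc (0 : ℝ) 1, ∀ z ∈ Ioc (0 : ℝ) 1, f z - f y = ∫ t in y..z, f' t) :
    ENNReal.ofReal (2 * Var[f; volume.restrict (Ioc 0 1)])
      ≤ ∫⁻ t in Ioc 0 1, ENNReal.ofReal (t * (1 - t) * f' t ^ 2) := calc
  ENNReal.ofReal (2 * Var[f; volume.restrict (Ioc 0 1)])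
      = ∫⁻ y in Ioc 0 1, ∫⁻ z in Ioc 0 1, ENNReal.ofReal ((f y - f z) ^ 2) :=
    (lintegral_lintegral_ofReal_sub_sq hf).symm
  _ ≤ ∫⁻ t in Ioc 0 1, uIocKernel (Ioc 0 1) t * ENNReal.ofReal (f' t ^ 2) :=
    lintegral_lintegral_ofReal_sq_sub_le measurableSet_Ioc ordConnected_Ioc hf' hdiff
  _ = ∫⁻ t in Ioc 0 1, ENNReal.ofReal (t * (1 - t) * f' t ^ 2) :=
    setLIntegral_congr_fun measurableSet_Ioc fun t ht => by
      rw [uIocKernel_Ioc_zero_one ht,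
        ← ENNReal.ofReal_mul (mul_nonneg ht.1.le (sub_nonneg.2 ht.2))]

/-- Sharp weighted Poincaré inequality on [0,1] with degenerate weight y(1-y). -/
theorem weighted_poincare (f f' : ℝ → ℝ)
    (hAC : ∀ x ∈ Set.Icc (0:ℝ) 1, f x = f 0 + ∫ t in (0:ℝ)..x, f' t)
    (hint : IntervalIntegrable f' volume 0 1)
    (hfin : IntegrableOn (fun y => y * (1 - y) * (f' y) ^ 2) (Set.Ioc (0:ℝ) 1) volume) :
    ∫ y in (0:ℝ)..1, (f y - ∫ z in (0:ℝ)..1, f z) ^ 2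
      ≤ (1 / 2) * ∫ y in (0:ℝ)..1, y * (1 - y) * (f' y) ^ 2 := by
  have hf_cont := continuousOn_of_eq_add_integral zero_le_one hAC hint
  have hf_memLp : MemLp f 2 (volume.restrict (Ioc 0 1)) := (memLp_two_iff_integrable_sq
    ((hf_cont.mono Ioc_subset_Icc_self).aestronglyMeasurable measurableSet_Ioc)).2
    (((hf_cont.pow 2).integrableOn_Icc).mono_set Ioc_subset_Icc_self)
  have hweight_nonneg : ∀ t ∈ Ioc (0 : ℝ) 1, 0 ≤ t * (1 - t) * f' t ^ 2 := fun t ht =>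
    mul_nonneg (mul_nonneg ht.1.le (sub_nonneg.2 ht.2)) (sq_nonneg _)
  have key := (ofReal_two_mul_variance_le hf_memLp hint.1.aestronglyMeasurable.aemeasurable
    fun y hy z hz => sub_eq_intervalIntegral_of_eq_add_integral hAC hint
      (Ioc_subset_Icc_self hy) (Ioc_subset_Icc_self hz)).trans_eq
    (ofReal_integral_eq_lintegral_ofReal hfin
      ((ae_restrict_mem measurableSet_Ioc).mono hweight_nonneg)).symm
  rw [ENNReal.ofReal_le_ofReal_iff (setIntegral_nonneg measurableSet_Ioc hweight_nonneg)] at key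
  simp only [intervalIntegral.integral_of_le zero_le_one]
  rw [← variance_eq_integral hf_memLp.aemeasurable]
  linarith
end

section
/- Let γ > 1, p(v) = v^{-γ}, and v₊ > 0. There exist constants C, δ* > 0 such that for any 0 < δ < δ* and any v, w > 0 with |p(v) - p(w)| < δ and |p(w) - p(v₊)| < δ, the relative pressure satisfies p(v|w) ≤ ( (γ+1)/(2γ) · 1/p(w) + Cδ ) |p(v) - p(w)|², where p(v|w) = p(v) - p(w) - p'(w)(v-w). -/
/-!
Write `a = p(v)` and `b = p(w)`. Since `v = a ^ (-1/γ)`, the relative pressure is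
`γ b ^ (1 + 1/γ)` times the first-order Taylor remainder at `b` of the inverse map
`q ↦ q ^ (-1/γ)`, evaluated at `a`. That remainder is at most `K/2 · (a - b)²` for any bound `K`
of the second derivative `(1/γ)(1/γ + 1) q ^ (-1/γ - 2)` on `[b - δ, b + δ]`; the second
derivative decreases, so `K` can be its value at `b - δ`. At `b` itself the resulting constant is
exactly `(γ + 1)/(2γ b)`, and moving to `b - δ` costs `O(δ)`, uniformly while `b` stays near
`p(v₊)`.
-/

/-- Pressure `p(v) = v^{-γ}`. -/
noncomputable def pγ (γ v : ℝ) : ℝ := v ^ (-γ)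

/-- Relative pressure `p(v|w) = p(v) - p(w) - p'(w)(v-w)` with `p'(w) = -γ w^{-γ-1}`. -/
noncomputable def prel (γ v w : ℝ) : ℝ := pγ γ v - pγ γ w - (-γ * w ^ (-γ - 1)) * (v - w)

open Set

theorem sub_sub_mul_sub_le_of_deriv2_le {s : Set ℝ} (hs : Convex ℝ s) {f f' f'' : ℝ → ℝ} {K : ℝ}
    (hf : ∀ x ∈ s, HasDerivAt f (f' x) x) (hf' : ∀ x ∈ s, HasDerivAt f' (f'' x) x)
    (hK : ∀ x ∈ s, f'' x ≤ K) {x y : ℝ} (hx : x ∈ s) (hy : y ∈ s) :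
    f x - f y - f' y * (x - y) ≤ K / 2 * (x - y) ^ 2 := by
  set g : ℝ → ℝ := fun t ↦ K / 2 * (t - y) ^ 2 - (f t - f y - f' y * (t - y))
  set g' : ℝ → ℝ := fun t ↦ K * (t - y) - (f' t - f' y)
  have hg : ∀ t ∈ s, HasDerivAt g (g' t) t := fun t ht ↦ by
    have hl := (((hasDerivAt_id' t).sub_const y).fun_pow 2).const_mul (K / 2)
    have hr := ((hf t ht).sub_const (f y)).fun_sub
      (((hasDerivAt_id' t).sub_const y).const_mul (f' y))
    exact (hl.fun_sub hr).congr_deriv (by simp only [g']; ring)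
  have hg' : ∀ t ∈ s, HasDerivAt g' (K - f'' t) t := fun t ht ↦ by
    simpa only [mul_one] using
      (((hasDerivAt_id' t).sub_const y).const_mul K).fun_sub ((hf' t ht).sub_const (f' y))
  have hconv : ConvexOn ℝ s g :=
    convexOn_of_hasDerivWithinAt2_nonneg hs
      (fun t ht ↦ (hg t ht).continuousAt.continuousWithinAt)
      (fun t ht ↦ (hg t (interior_subset ht)).hasDerivWithinAt)
      (fun t ht ↦ (hg' t (interior_subset ht)).hasDerivWithinAt)
      (fun t ht ↦ sub_nonneg.2 (hK t (interior_subset ht)))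
  have hgy : HasDerivAt g 0 y := by simpa only [g', sub_self, mul_zero] using hg y hy
  have hgy0 : g y = 0 := by simp [g]
  suffices 0 ≤ g x by simp only [g] at this; linarith
  rcases lt_trichotomy x y with hxy | rfl | hxy
  · have := hconv.slope_le_of_hasDerivAt hx hy hxy hgy
    rw [slope_def_field, hgy0, div_le_iff₀ (sub_pos.2 hxy)] at this
    linarith
  · exact hgy0.ge
  · have := hconv.le_slope_of_hasDerivAt hy hx hxy hgy
    rw [slope_def_field, hgy0, le_div_iff₀ (sub_pos.2 hxy)] at this
    linarith

theorem rpow_sub_rpow_le_of_nonpos {q m x y : ℝ} (hq : q ≤ 0) (hm : 0 < m) (hmx : m ≤ x)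
    (hxy : x ≤ y) : x ^ q - y ^ q ≤ -q * m ^ (q - 1) * (y - x) := by
  have hderiv : ∀ t ∈ Ici m, HasDerivAt (fun t : ℝ ↦ t ^ q) (q * t ^ (q - 1)) t :=
    fun t ht ↦ Real.hasDerivAt_rpow_const (Or.inl (hm.trans_le ht).ne')
  have hslope : ∀ t ∈ interior (Ici m), q * m ^ (q - 1) ≤ deriv (fun t : ℝ ↦ t ^ q) t :=
    fun t ht ↦ by
      rw [(hderiv t (interior_subset ht)).deriv]
      exact mul_le_mul_of_nonpos_left
        (Real.rpow_le_rpow_of_nonpos hm (interior_subset ht) (by linarith)) hq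
  have := (convex_Ici m).mul_sub_le_image_sub_of_le_deriv
    (fun t ht ↦ (hderiv t ht).continuousAt.continuousWithinAt)
    (fun t ht ↦ (hderiv t (interior_subset ht)).differentiableAt.differentiableWithinAt)
    hslope x hmx y (hmx.trans hxy) hxy
  linarith

theorem rpow_mul_rpow_neg_sub_one_le {s m l b M : ℝ} (hs : 0 ≤ s) (hm : 0 < m) (hml : m ≤ l)
    (hlb : l ≤ b) (hbM : b ≤ M) :
    b ^ s * l ^ (-s - 1) ≤ b⁻¹ + M ^ s * ((s + 1) * m ^ (-s - 2)) * (b - l) := by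
  have hl : 0 < l := hm.trans_le hml
  have hb : 0 < b := hl.trans_le hlb
  have hlip : l ^ (-s - 1) - b ^ (-s - 1) ≤ (s + 1) * m ^ (-s - 2) * (b - l) := by
    simpa only [show -s - 1 - 1 = -s - 2 by ring, show -(-s - 1) = s + 1 by ring] using
      rpow_sub_rpow_le_of_nonpos (by linarith : -s - 1 ≤ 0) hm hml hlb
  have hdiff : 0 ≤ l ^ (-s - 1) - b ^ (-s - 1) :=
    sub_nonneg.2 (Real.rpow_le_rpow_of_nonpos hl hlb (by linarith))
  have hM : 0 ≤ M ^ s := Real.rpow_nonneg (hb.le.trans hbM) s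
  have hbs : b ^ s * b ^ (-s - 1) = b⁻¹ := by
    rw [← Real.rpow_add hb, show s + (-s - 1) = -1 by ring, Real.rpow_neg_one]
  calc b ^ s * l ^ (-s - 1) = b⁻¹ + b ^ s * (l ^ (-s - 1) - b ^ (-s - 1)) := by
        rw [mul_sub, hbs]; ring
    _ ≤ b⁻¹ + M ^ s * ((s + 1) * m ^ (-s - 2) * (b - l)) := by
        gcongr
    _ = _ := by ring

theorem rpow_sub_rpow_sub_mul_sub_le {e l a b : ℝ} (he : e ≤ 0) (hl : 0 < l) (hla : l ≤ a)
    (hlb : l ≤ b) :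
    a ^ e - b ^ e - e * b ^ (e - 1) * (a - b) ≤ e * (e - 1) / 2 * l ^ (e - 2) * (a - b) ^ 2 := by
  have hne : ∀ t ∈ Ici l, t ≠ 0 := fun t ht ↦ (hl.trans_le ht).ne'
  have hK : ∀ t ∈ Ici l, e * ((e - 1) * t ^ (e - 1 - 1)) ≤ e * (e - 1) * l ^ (e - 2) := by
    intro t ht
    rw [← mul_assoc, show e - 1 - 1 = e - 2 by ring]
    exact mul_le_mul_of_nonneg_left (Real.rpow_le_rpow_of_nonpos hl ht (by linarith))
      (by nlinarith)
  have := sub_sub_mul_sub_le_of_deriv2_le (convex_Ici l)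
    (fun t ht ↦ Real.hasDerivAt_rpow_const (Or.inl (hne t ht)))
    (fun t ht ↦ (Real.hasDerivAt_rpow_const (Or.inl (hne t ht))).const_mul e) hK hla hlb
  linarith

theorem pγ_rpow_neg_inv {γ v : ℝ} (hγ : γ ≠ 0) (hv : 0 < v) : pγ γ v ^ (-γ⁻¹) = v := by
  rw [pγ, ← Real.rpow_mul hv.le, neg_mul_neg, mul_inv_cancel₀ hγ, Real.rpow_one]

theorem prel_eq_mul_inverse_taylor {γ v w : ℝ} (hγ : γ ≠ 0) (hv : 0 < v) (hw : 0 < w) :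
    prel γ v w = γ * pγ γ w ^ (γ⁻¹ + 1) * (pγ γ v ^ (-γ⁻¹) - pγ γ w ^ (-γ⁻¹) -
      -γ⁻¹ * pγ γ w ^ (-γ⁻¹ - 1) * (pγ γ v - pγ γ w)) := by
  have h1 : pγ γ w ^ (γ⁻¹ + 1) = w ^ (-γ - 1) := by
    rw [pγ, ← Real.rpow_mul hw.le]; congr 1; field_simp; ring
  have h2 : pγ γ w ^ (-γ⁻¹ - 1) = w ^ (γ + 1) := by
    rw [pγ, ← Real.rpow_mul hw.le]; congr 1; field_simp; ring
  have h3 : γ * w ^ (-γ - 1) * (γ⁻¹ * w ^ (γ + 1)) = 1 := by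
    rw [mul_mul_mul_comm, mul_inv_cancel₀ hγ, ← Real.rpow_add hw,
      show -γ - 1 + (γ + 1) = 0 by ring, Real.rpow_zero, one_mul]
  rw [pγ_rpow_neg_inv hγ hv, pγ_rpow_neg_inv hγ hw, h1, h2, prel]
  linear_combination (pγ γ w - pγ γ v) * h3

theorem prel_le_of_le_pγ {γ v w l : ℝ} (hγ : 0 < γ) (hv : 0 < v) (hw : 0 < w) (hl : 0 < l)
    (hlv : l ≤ pγ γ v) (hlw : l ≤ pγ γ w) :
    prel γ v w ≤ (γ + 1) / (2 * γ) * (pγ γ w ^ (γ⁻¹ + 1) * l ^ (-(γ⁻¹ + 1) - 1)) *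
      (pγ γ v - pγ γ w) ^ 2 := by
  have htaylor := rpow_sub_rpow_sub_mul_sub_le (neg_nonpos.2 (inv_pos.2 hγ).le) hl hlv hlw
  have hb : 0 ≤ pγ γ w ^ (γ⁻¹ + 1) := Real.rpow_nonneg (hl.le.trans hlw) _
  calc prel γ v w ≤ γ * pγ γ w ^ (γ⁻¹ + 1) *
        (-γ⁻¹ * (-γ⁻¹ - 1) / 2 * l ^ (-γ⁻¹ - 2) * (pγ γ v - pγ γ w) ^ 2) := by
        rw [prel_eq_mul_inverse_taylor hγ.ne' hv hw]
        exact mul_le_mul_of_nonneg_left htaylor (mul_nonneg hγ.le hb)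
    _ = _ := by rw [show -(γ⁻¹ + 1) - 1 = -γ⁻¹ - 2 by ring]; field_simp; ring

/-- Sharp quadratic upper bound on the relative pressure in terms of the
pressure difference, with leading coefficient `(γ+1)/(2γ p(w))`. -/
theorem rel_pressure_sharp_upper (γ vplus : ℝ) (hγ : 1 < γ) (hvplus : 0 < vplus) :
    ∃ C > 0, ∃ δstar > 0, ∀ δ : ℝ, 0 < δ → δ < δstar →
      ∀ v w : ℝ, 0 < v → 0 < w →
        |pγ γ v - pγ γ w| < δ → |pγ γ w - pγ γ vplus| < δ →
        prel γ v w ≤ ((γ + 1) / (2 * γ) * (1 / pγ γ w) + C * δ) * (pγ γ v - pγ γ w) ^ 2 := by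
  have hγ0 : 0 < γ := by linarith
  set p₀ := pγ γ vplus
  have hp₀ : 0 < p₀ := Real.rpow_pos_of_pos hvplus _
  set s := γ⁻¹ + 1
  have hs : 0 ≤ s := by positivity
  set C₀ := (2 * p₀) ^ s * ((s + 1) * (p₀ / 2) ^ (-s - 2))
  refine ⟨(γ + 1) / (2 * γ) * C₀, by positivity, p₀ / 4, by positivity, ?_⟩
  intro δ hδ hδstar v w hv hw hvw hwp
  rw [abs_lt] at hvw hwp
  have hm : p₀ / 2 ≤ pγ γ w - δ := by linarith
  have hcoeff := rpow_mul_rpow_neg_sub_one_le hs (by positivity) hm (by linarith)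
    (by linarith : pγ γ w ≤ 2 * p₀)
  calc prel γ v w ≤ (γ + 1) / (2 * γ) * (pγ γ w ^ s * (pγ γ w - δ) ^ (-s - 1)) *
        (pγ γ v - pγ γ w) ^ 2 :=
        prel_le_of_le_pγ hγ0 hv hw (by linarith) (by linarith) (by linarith)
    _ ≤ (γ + 1) / (2 * γ) * ((pγ γ w)⁻¹ + C₀ * δ) * (pγ γ v - pγ γ w) ^ 2 := by
        gcongr; simpa only [sub_sub_cancel] using hcoeff
    _ = _ := by ring
end

section
/- Let γ > 1, Q(v) = v^{-(γ-1)}/(γ-1), p(v) = v^{-γ}, and v₊ > 0. There exist constants C, δ* > 0 such that for any 0 < δ < δ* and any v, w > 0 with |p(v) - p(w)| < δ and |p(w) - p(v₊)| < δ, one has Q(v|w) ≥ (p(w)^{-1/γ - 1}/(2γ)) |p(v)-p(w)|² − ((1+γ)/(3γ²)) p(w)^{-1/γ - 2} (p(v)-p(w))³, where Q(v|w) = Q(v) - Q(w) - Q'(w)(v-w). -/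
/-- Internal energy `Q(v) = v^{-(γ-1)}/(γ-1)`. -/
noncomputable def Qγ (γ v : ℝ) : ℝ := v ^ (-(γ - 1)) / (γ - 1)

/-- Relative internal energy `Q(v|w)`; note `Q'(w) = -w^{-γ} = -p(w)`. -/
noncomputable def Qrel (γ v w : ℝ) : ℝ := Qγ γ v - Qγ γ w - (-(w ^ (-γ))) * (v - w)

/-!
Write `x = p(v)`, `r = p(w)` and `a = -1/γ`, so that `v = x^a`. Then `Q(v|w) = G(x) - G(r)` with
`G(x) = Q(x^a) + r x^a`, and `G'(r) = 0`. The fourth derivative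
`G''''(x) = a(a-1)(a-2) x^(a-4) ((a-3) r - a x)` is nonnegative for `0 < x < (1 + 3γ) r`, so there
`G` lies above its cubic Taylor polynomial at `r`, whose coefficients `G''(r)/2 = r^(a-1)/(2γ)` and
`G'''(r)/6 = -(1+γ) r^(a-2)/(3γ²)` are those of the bound. The Taylor bound itself comes from
applying twice the fact that a convex function lies above a horizontal tangent. Finally
`δ* = p(v₊)/2` forces `p(v) < 2 p(w)`, which is within that range.
-/

open Set

theorem ConvexOn.le_of_hasDerivAt_eq_zero {S : Set ℝ} {f : ℝ → ℝ} {r x : ℝ}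
    (hf : ConvexOn ℝ S f) (hr : r ∈ S) (hx : x ∈ S) (hd : HasDerivAt f 0 r) :
    f r ≤ f x := by
  rcases lt_trichotomy r x with h | rfl | h
  · have := hf.le_slope_of_hasDerivAt hr hx h hd
    rw [slope_def_field, le_div_iff₀ (sub_pos.2 h)] at this
    linarith
  · exact le_rfl
  · have := hf.slope_le_of_hasDerivAt hx hr h hd
    rw [slope_def_field, div_le_iff₀ (sub_pos.2 h)] at this
    linarith

theorem le_of_hasDerivAt_eq_zero_of_deriv2_nonneg {S : Set ℝ} (hS : Convex ℝ S)
    {f f' f'' : ℝ → ℝ} (hf : ∀ y ∈ S, HasDerivAt f (f' y) y)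
    (hf' : ∀ y ∈ S, HasDerivAt f' (f'' y) y) (hf'' : ∀ y ∈ S, 0 ≤ f'' y)
    {r x : ℝ} (hr : r ∈ S) (hx : x ∈ S) (h0 : f' r = 0) : f r ≤ f x := by
  have hconv : ConvexOn ℝ S f :=
    convexOn_of_hasDerivWithinAt2_nonneg hS
      (fun y hy => (hf y hy).continuousAt.continuousWithinAt)
      (fun y hy => (hf y (interior_subset hy)).hasDerivWithinAt)
      (fun y hy => (hf' y (interior_subset hy)).hasDerivWithinAt)
      (fun y hy => hf'' y (interior_subset hy))
  exact hconv.le_of_hasDerivAt_eq_zero hr hx (h0 ▸ hf r hr)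

theorem taylor_cubic_le_of_deriv4_nonneg {S : Set ℝ} (hS : Convex ℝ S)
    {f f₁ f₂ f₃ f₄ : ℝ → ℝ} (hf : ∀ y ∈ S, HasDerivAt f (f₁ y) y)
    (hf₁ : ∀ y ∈ S, HasDerivAt f₁ (f₂ y) y) (hf₂ : ∀ y ∈ S, HasDerivAt f₂ (f₃ y) y)
    (hf₃ : ∀ y ∈ S, HasDerivAt f₃ (f₄ y) y) (hf₄ : ∀ y ∈ S, 0 ≤ f₄ y)
    {r x : ℝ} (hr : r ∈ S) (hx : x ∈ S) :
    f r + f₁ r * (x - r) + f₂ r / 2 * (x - r) ^ 2 + f₃ r / 6 * (x - r) ^ 3 ≤ f x := by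
  have hline (c : ℝ) (y : ℝ) : HasDerivAt (fun z => c * (z - r)) c y := by
    simpa using ((hasDerivAt_id y).sub_const r).const_mul c
  have hpow (c : ℝ) (n : ℕ) (y : ℝ) :
      HasDerivAt (fun z => c * (z - r) ^ (n + 1)) (c * (n + 1) * (y - r) ^ n) y := by
    simpa [mul_assoc] using (((hasDerivAt_id y).sub_const r).pow (n + 1)).const_mul c
  have hf₂_above_tangent : ∀ y ∈ S, 0 ≤ f₂ y - f₂ r - f₃ r * (y - r) := by
    intro y hy
    have := le_of_hasDerivAt_eq_zero_of_deriv2_nonneg hS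
      (f := fun z => f₂ z - f₃ r * (z - r)) (f' := fun z => f₃ z - f₃ r)
      (fun z hz => (hf₂ z hz).sub (hline _ z)) (fun z hz => (hf₃ z hz).sub_const _) hf₄
      hr hy (sub_self _)
    simp only [sub_self, mul_zero, sub_zero] at this
    linarith
  have := le_of_hasDerivAt_eq_zero_of_deriv2_nonneg hS
    (f := fun z => f z - f₁ r * (z - r) - f₂ r / 2 * (z - r) ^ 2 - f₃ r / 6 * (z - r) ^ 3)
    (f' := fun z => f₁ z - f₁ r - f₂ r * (z - r) - f₃ r / 2 * (z - r) ^ 2)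
    (fun z hz => by
      refine ((((hf z hz).sub (hline (f₁ r) z)).sub (hpow (f₂ r / 2) 1 z)).sub
        (hpow (f₃ r / 6) 2 z)).congr_deriv ?_
      push_cast; ring)
    (fun z hz => by
      refine ((((hf₁ z hz).sub_const (f₁ r)).sub (hline (f₂ r) z)).sub
        (hpow (f₃ r / 2) 1 z)).congr_deriv ?_
      push_cast; ring)
    hf₂_above_tangent hr hx (by ring)
  simp only [sub_self, mul_zero, sub_zero, ne_eq, OfNat.ofNat_ne_zero, not_false_eq_true,
    zero_pow] at this
  linarith

/-- `Q(v) + r v` as a function of `x = p(v) = v^(1/a)`, where `a = -1/γ`. -/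
noncomputable def energyInPressure (a r x : ℝ) : ℝ := -a / (a + 1) * x ^ (a + 1) + r * x ^ a

theorem hasDerivAt_mul_rpow_add_mul_rpow (c d e₁ e₂ : ℝ) {x : ℝ} (hx : x ≠ 0) :
    HasDerivAt (fun y => c * y ^ e₁ + d * y ^ e₂)
      (c * e₁ * x ^ (e₁ - 1) + d * e₂ * x ^ (e₂ - 1)) x := by
  have h := ((Real.hasDerivAt_rpow_const (p := e₁) (Or.inl hx)).const_mul c).add
    ((Real.hasDerivAt_rpow_const (p := e₂) (Or.inl hx)).const_mul d)
  exact h.congr_deriv (by ring)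

theorem deriv4_energyInPressure_nonneg {a r y : ℝ} (ha : a < 0) (hy : 0 < y) (hyr : y < (a - 3) / a * r) :
    0 ≤ -a * a * (a - 1) * (a - 2) * y ^ (a - 3)
      + a * (a - 1) * (a - 2) * (a - 3) * r * y ^ (a - 4) := by
  have hy' : y ^ (a - 3) = y ^ (a - 4) * y := by
    rw [← Real.rpow_add_one hy.ne']; ring_nf
  have hlin : 0 ≤ a * y - (a - 3) * r := by
    rw [div_mul_eq_mul_div, lt_div_iff_of_neg ha] at hyr; linarith
  have hcoef : 0 ≤ -a * (1 - a) * (2 - a) :=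
    (mul_pos (mul_pos (neg_pos.2 ha) (by linarith)) (by linarith)).le
  have := mul_nonneg (mul_nonneg hcoef (Real.rpow_pos_of_pos hy (a - 4)).le) hlin
  rw [hy']
  linear_combination this

theorem cubic_le_energyInPressure_sub {a r x : ℝ} (ha : a < 0) (ha1 : a ≠ -1)
    (hr : 0 < r) (hx : 0 < x) (hxr : x < (a - 3) / a * r) :
    -a / 2 * r ^ (a - 1) * (x - r) ^ 2 - a * (a - 1) / 3 * r ^ (a - 2) * (x - r) ^ 3
      ≤ energyInPressure a r x - energyInPressure a r r := by
  set S := Ioo 0 ((a - 3) / a * r)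
  have hrS : r ∈ S := ⟨hr, by rw [div_mul_eq_mul_div, lt_div_iff_of_neg ha]; nlinarith⟩
  have hderiv (c d e₁ e₂ : ℝ) (y : ℝ) (hy : y ∈ S) :=
    hasDerivAt_mul_rpow_add_mul_rpow c d e₁ e₂ hy.1.ne'
  have ha1' : a + 1 ≠ 0 := fun h => ha1 (by linarith)
  have h := taylor_cubic_le_of_deriv4_nonneg (convex_Ioo _ _)
    (f := energyInPressure a r)
    (f₁ := fun y => -a * y ^ a + a * r * y ^ (a - 1))
    (f₂ := fun y => -a * a * y ^ (a - 1) + a * (a - 1) * r * y ^ (a - 2))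
    (f₃ := fun y => -a * a * (a - 1) * y ^ (a - 2) + a * (a - 1) * (a - 2) * r * y ^ (a - 3))
    (f₄ := fun y => -a * a * (a - 1) * (a - 2) * y ^ (a - 3)
      + a * (a - 1) * (a - 2) * (a - 3) * r * y ^ (a - 4))
    (fun y hy => (hderiv _ _ _ _ y hy).congr_deriv (by field_simp; ring_nf))
    (fun y hy => (hderiv _ _ _ _ y hy).congr_deriv (by ring_nf))
    (fun y hy => (hderiv _ _ _ _ y hy).congr_deriv (by ring_nf))
    (fun y hy => (hderiv _ _ _ _ y hy).congr_deriv (by ring_nf))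
    (fun y hy => deriv4_energyInPressure_nonneg ha hy.1 hy.2) hrS ⟨hx, hxr⟩
  have hpow_succ (e : ℝ) : r ^ (e + 1) = r ^ e * r := Real.rpow_add_one hr.ne' e
  have h₁ := hpow_succ (a - 1)
  have h₂ := hpow_succ (a - 2)
  have h₃ := hpow_succ (a - 3)
  simp only [sub_add_cancel, show a - 2 + 1 = a - 1 by ring, show a - 3 + 1 = a - 2 by ring]
    at h₁ h₂ h₃
  linear_combination h + a * (x - r) * h₁ + a * (a - 1) / 2 * (x - r) ^ 2 * h₂
    + a * (a - 1) * (a - 2) / 6 * (x - r) ^ 3 * h₃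

theorem pγ_rpow {γ v : ℝ} (hv : 0 < v) (e : ℝ) : pγ γ v ^ e = v ^ (-γ * e) := by
  rw [pγ, ← Real.rpow_mul hv.le]

theorem Qrel_eq_energyInPressure_sub {γ v w : ℝ} (hγ₀ : γ ≠ 0) (hγ₁ : γ ≠ 1)
    (hv : 0 < v) (hw : 0 < w) :
    Qrel γ v w = energyInPressure (-1 / γ) (pγ γ w) (pγ γ v)
      - energyInPressure (-1 / γ) (pγ γ w) (pγ γ w) := by
  have hγ₁' : γ - 1 ≠ 0 := sub_ne_zero.2 hγ₁
  have e₁ : -γ * (-1 / γ) = 1 := by field_simp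
  have e₂ : -γ * (-1 / γ + 1) = -(γ - 1) := by field_simp; ring
  have hc : -(-1 / γ) / (-1 / γ + 1) = 1 / (γ - 1) := by
    rw [show -1 / γ + 1 = (γ - 1) / γ by field_simp; ring]
    field_simp
  simp only [energyInPressure, pγ_rpow hv, pγ_rpow hw, e₁, e₂, Real.rpow_one, hc]
  rw [Qrel, Qγ, Qγ, pγ]
  ring

/-- Sharp lower bound for the relative internal energy in terms of the
pressure difference, for nearby states. -/
theorem rel_internal_energy_sharp_lower (γ vplus : ℝ) (hγ : 1 < γ) (hvplus : 0 < vplus) :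
    ∃ C > 0, ∃ δstar > 0, ∀ δ : ℝ, 0 < δ → δ < δstar →
      ∀ v w : ℝ, 0 < v → 0 < w →
        |pγ γ v - pγ γ w| < δ → |pγ γ w - pγ γ vplus| < δ →
        (pγ γ w ^ (-1 / γ - 1) / (2 * γ)) * (pγ γ v - pγ γ w) ^ 2
          - ((1 + γ) / (3 * γ ^ 2)) * pγ γ w ^ (-1 / γ - 2) * (pγ γ v - pγ γ w) ^ 3
          ≤ Qrel γ v w := by
  have hγ₀ : 0 < γ := by linarith
  have hpplus : 0 < pγ γ vplus := Real.rpow_pos_of_pos hvplus _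
  refine ⟨1, one_pos, pγ γ vplus / 2, by positivity, ?_⟩
  intro δ _ hδ v w hv hw hvw hwp
  have hpv : 0 < pγ γ v := Real.rpow_pos_of_pos hv _
  have hlt : pγ γ v < (-1 / γ - 3) / (-1 / γ) * pγ γ w := by
    rw [show (-1 / γ - 3) / (-1 / γ) = 1 + 3 * γ by field_simp; ring]
    rw [abs_lt] at hvw hwp
    nlinarith
  have key := cubic_le_energyInPressure_sub (by simpa [neg_div] using hγ₀)
    (by intro h; field_simp at h; linarith) (by linarith [abs_lt.1 hwp]) hpv hlt
  rw [Qrel_eq_energyInPressure_sub hγ₀.ne' hγ.ne' hv hw]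
  refine le_of_eq_of_le ?_ key
  field_simp
  ring
end

section
/- Let γ > 1, Q(v) = v^{-(γ-1)}/(γ-1), p(v) = v^{-γ}, and v₊ > 0. There exist constants C, δ* > 0 such that for any 0 < δ < δ* and any v, w > 0 with |p(v) - p(w)| < δ and |p(w) - p(v₊)| < δ, one has Q(v|w) ≤ ( p(w)^{-1/γ-1}/(2γ) + Cδ ) |p(v) - p(w)|², where Q(v|w) = Q(v) - Q(w) - Q'(w)(v-w). -/
/-!
In pressure coordinates the relative energy is `F(p) - F(q)` with `q = p(w)`, `p = p(v)` and
`F(x) = Q(x^{-1/γ}) + q x^{-1/γ}`. Since `Q' = -p`, one gets `F'(x) = (x - q) x^{-1/γ-1} / γ`, which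
vanishes at `q`, so `F(p) - F(q) ≤ ½ sup (x^{-1/γ-1}/γ) (p - q)²`, the supremum taken between `p` and
`q`. Both lie within `2δ` of `p(v₊)`, hence away from `0`, where `x ↦ x^{-1/γ-1}` is Lipschitz: the
supremum exceeds `q^{-1/γ-1}/γ` by at most a constant times `δ`.
-/

open Real Set

lemma sub_le_mul_sq_of_hasDerivAt {f g : ℝ → ℝ} {p q A : ℝ}
    (hf : ∀ x ∈ uIcc p q, HasDerivAt f ((x - q) * g x) x) (hg : ∀ x ∈ uIcc p q, g x ≤ 2 * A) :
    f p - f q ≤ A * (p - q) ^ 2 := by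
  set h : ℝ → ℝ := fun x => f x - A * (x - q) ^ 2
  have hh : ∀ x ∈ uIcc p q, HasDerivAt h ((x - q) * (g x - 2 * A)) x := fun x hx => by
    refine ((hf x hx).sub ((((hasDerivAt_id x).sub_const q).pow 2).const_mul A)).congr_deriv ?_
    simp only [id, Nat.cast_ofNat]
    ring
  have hcont : ContinuousOn h (uIcc p q) := fun x hx => (hh x hx).continuousAt.continuousWithinAt
  have hderiv (s : Set ℝ) (hs : s ⊆ uIcc p q) (x : ℝ) (hx : x ∈ interior s) :
      HasDerivWithinAt h ((x - q) * (g x - 2 * A)) (interior s) x :=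
    (hh x (hs (interior_subset hx))).hasDerivWithinAt
  suffices h p ≤ h q by simp only [h, sub_self] at this; linarith
  rcases le_total p q with hpq | hqp
  · refine monotoneOn_of_hasDerivWithinAt_nonneg (convex_Icc p q) (hcont.mono Icc_subset_uIcc)
      (hderiv _ Icc_subset_uIcc) (fun x hx => ?_) (left_mem_Icc.2 hpq) (right_mem_Icc.2 hpq) hpq
    rw [interior_Icc] at hx
    have := hg x (Icc_subset_uIcc (Ioo_subset_Icc_self hx))
    exact mul_nonneg_of_nonpos_of_nonpos (by linarith [hx.2]) (by linarith)
  · refine antitoneOn_of_hasDerivWithinAt_nonpos (convex_Icc q p) (hcont.mono Icc_subset_uIcc')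
      (hderiv _ Icc_subset_uIcc') (fun x hx => ?_) (left_mem_Icc.2 hqp) (right_mem_Icc.2 hqp) hqp
    rw [interior_Icc] at hx
    have := hg x (Icc_subset_uIcc' (Ioo_subset_Icc_self hx))
    exact mul_nonpos_of_nonneg_of_nonpos (by linarith [hx.1]) (by linarith)

lemma abs_rpow_sub_rpow_le {s m x y : ℝ} (hs : s ≤ 1) (hm : 0 < m) (hx : m ≤ x) (hy : m ≤ y) :
    |x ^ s - y ^ s| ≤ |s| * m ^ (s - 1) * |x - y| := by
  refine Convex.norm_image_sub_le_of_norm_hasDerivWithin_le (f := fun t => t ^ s)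
    (fun t ht => (hasDerivAt_rpow_const (Or.inl (hm.trans_le ht).ne')).hasDerivWithinAt)
    (fun t ht => ?_) (convex_Ici m) hy hx
  rw [norm_mul, norm_eq_abs, norm_eq_abs, abs_of_pos (rpow_pos_of_pos (hm.trans_le ht) _)]
  exact mul_le_mul_of_nonneg_left (rpow_le_rpow_of_nonpos hm ht (by linarith)) (abs_nonneg s)

lemma hasDerivAt_Qγ {γ v : ℝ} (hγ : γ ≠ 1) (hv : 0 < v) : HasDerivAt (Qγ γ) (-pγ γ v) v := by
  refine ((hasDerivAt_rpow_const (p := -(γ - 1)) (Or.inl hv.ne')).div_const (γ - 1)).congr_deriv ?_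
  rw [pγ, show -(γ - 1) - 1 = -γ by ring, neg_mul, neg_div, mul_div_cancel_left₀ _ (sub_ne_zero.2 hγ)]

lemma pγ_rpow_neg_one_div {γ v : ℝ} (hγ : γ ≠ 0) (hv : 0 < v) : pγ γ v ^ (-1 / γ) = v := by
  rw [pγ, ← rpow_mul hv.le, show -γ * (-1 / γ) = 1 by field_simp, rpow_one]

lemma pγ_pγ_rpow_neg_one_div {γ x : ℝ} (hγ : γ ≠ 0) (hx : 0 < x) : pγ γ (x ^ (-1 / γ)) = x := by
  rw [pγ, ← rpow_mul hx.le, show -1 / γ * -γ = 1 by field_simp, rpow_one]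

noncomputable def relEnergyInPressure (γ q x : ℝ) : ℝ := Qγ γ (x ^ (-1 / γ)) + q * x ^ (-1 / γ)

lemma Qrel_eq_relEnergyInPressure_sub {γ v w : ℝ} (hγ : γ ≠ 0) (hv : 0 < v) (hw : 0 < w) :
    Qrel γ v w = relEnergyInPressure γ (pγ γ w) (pγ γ v)
      - relEnergyInPressure γ (pγ γ w) (pγ γ w) := by
  rw [relEnergyInPressure, relEnergyInPressure, pγ_rpow_neg_one_div hγ hv,
    pγ_rpow_neg_one_div hγ hw, Qrel, pγ]
  ring

lemma hasDerivAt_relEnergyInPressure {γ q x : ℝ} (hγ₀ : γ ≠ 0) (hγ₁ : γ ≠ 1) (hx : 0 < x) :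
    HasDerivAt (relEnergyInPressure γ q) ((x - q) * (x ^ (-1 / γ - 1) / γ)) x := by
  have hV := hasDerivAt_rpow_const (p := -1 / γ) (Or.inl hx.ne')
  have hQ := hasDerivAt_Qγ hγ₁ (rpow_pos_of_pos hx (-1 / γ))
  rw [pγ_pγ_rpow_neg_one_div hγ₀ hx] at hQ
  refine ((hQ.comp x hV).add (hV.const_mul q)).congr_deriv ?_
  ring

/-- Sharp quadratic upper bound for the relative internal energy in terms of the
pressure difference, for nearby states. -/
theorem rel_internal_energy_sharp_upper (γ vplus : ℝ) (hγ : 1 < γ) (hvplus : 0 < vplus) :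
    ∃ C > 0, ∃ δstar > 0, ∀ δ : ℝ, 0 < δ → δ < δstar →
      ∀ v w : ℝ, 0 < v → 0 < w →
        |pγ γ v - pγ γ w| < δ → |pγ γ w - pγ γ vplus| < δ →
        Qrel γ v w ≤ (pγ γ w ^ (-1 / γ - 1) / (2 * γ) + C * δ) * (pγ γ v - pγ γ w) ^ 2 := by
  have hγ0 : 0 < γ := by linarith
  set p₀ := pγ γ vplus
  have hp₀ : 0 < p₀ := rpow_pos_of_pos hvplus _
  set s : ℝ := -1 / γ - 1
  have hs : s < 0 := by
    have : -1 / γ < 0 := div_neg_of_neg_of_pos neg_one_lt_zero hγ0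
    simp only [s]
    linarith
  have hs_abs : 0 < |s| := abs_pos.2 hs.ne
  set L := |s| * (p₀ / 2) ^ (s - 1)
  refine ⟨L / (2 * γ), by positivity, p₀ / 4, by positivity, fun δ _ hδ v w hv hw hvw hw₀ => ?_⟩
  rw [abs_lt] at hw₀
  have hq : p₀ / 2 ≤ pγ γ w := by linarith
  have hp : p₀ / 2 ≤ pγ γ v := by linarith [(abs_lt.1 hvw).1]
  rw [Qrel_eq_relEnergyInPressure_sub hγ0.ne' hv hw]
  have hmx : ∀ x ∈ uIcc (pγ γ v) (pγ γ w), p₀ / 2 ≤ x := fun x hx => (le_inf hp hq).trans hx.1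
  refine sub_le_mul_sq_of_hasDerivAt (fun x hx =>
    hasDerivAt_relEnergyInPressure hγ0.ne' hγ.ne' (by linarith [hmx x hx])) (fun x hx => ?_)
  have hxq : |x - pγ γ w| ≤ δ := (abs_sub_left_of_mem_uIcc (by rwa [uIcc_comm] at hx)).trans hvw.le
  have hLip := abs_le.1 (abs_rpow_sub_rpow_le (s := s) (by linarith) (by positivity) (hmx x hx) hq)
  calc x ^ s / γ ≤ (pγ γ w ^ s + L * δ) / γ := by
        gcongr
        linarith [mul_le_mul_of_nonneg_left hxq (by positivity : 0 ≤ L)]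
    _ = 2 * (pγ γ w ^ s / (2 * γ) + L / (2 * γ) * δ) := by field_simp
end

section
/- Suppose g₁ : ℝ → ℝ satisfies |g₁(ξ)| ≤ Cδ₁²·exp(−Cδ₁|ξ|) for all ξ, and g₂ : ℝ → ℝ satisfies |g₂(x)| ≤ Cδ₂·exp(−Cδ₂|x − m(t)|) for x ≤ m(t) and |g₂(x)| ≤ Cδ₂ for x ≥ m(t). Assume s(t) ≤ −(|σ₁|/2)t and m(t) ≥ (σ₂/2)t with σ₁ < 0 < σ₂. Then for all x ∈ ℝ and t > 0: |g₁(x − s(t))|·|g₂(x)| ≤ C²δ₁²δ₂·exp(−C·min(δ₁,δ₂)·min(|σ₁|,σ₂)·t/2). -/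
/-- Abstract wave-interaction estimate: `g₁` models the derivative of the shifted
1-viscous shock centered at `s(t)`, `g₂` the deviation of the shifted 2-viscous
shock from its left end state, centered at `m(t)`. -/
theorem wave_interaction_estimate (C δ1 δ2 σ1 σ2 : ℝ)
    (hC : 0 < C) (hδ1 : 0 < δ1) (hδ2 : 0 < δ2) (hσ1 : σ1 < 0) (hσ2 : 0 < σ2)
    (g1 : ℝ → ℝ) (g2 : ℝ → ℝ → ℝ) (s m : ℝ → ℝ)
    (hg1 : ∀ ξ : ℝ, |g1 ξ| ≤ C * δ1 ^ 2 * Real.exp (-C * δ1 * |ξ|))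
    (hg2a : ∀ t x : ℝ, x ≤ m t → |g2 t x| ≤ C * δ2 * Real.exp (-C * δ2 * |x - m t|))
    (hg2b : ∀ t x : ℝ, m t ≤ x → |g2 t x| ≤ C * δ2)
    (hs : ∀ t : ℝ, 0 < t → s t ≤ -(|σ1| / 2) * t)
    (hm : ∀ t : ℝ, 0 < t → (σ2 / 2) * t ≤ m t) :
    ∀ t : ℝ, 0 < t → ∀ x : ℝ,
      |g1 (x - s t)| * |g2 t x|
        ≤ C ^ 2 * δ1 ^ 2 * δ2 * Real.exp (-C * min δ1 δ2 * min |σ1| σ2 * t / 2) := by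
  intro t ht x
  set E := Real.exp (-C * min δ1 δ2 * min |σ1| σ2 * t / 2) with hEdef
  have hE : 0 < E := Real.exp_pos _
  have hσ1' : 0 < |σ1| := abs_pos.mpr (ne_of_lt hσ1)
  have hmin1 : 0 < min δ1 δ2 := lt_min hδ1 hδ2
  have hmin2 : 0 < min |σ1| σ2 := lt_min hσ1' hσ2
  rcases le_or_gt x 0 with hx | hx
  · -- x ≤ 0 : use decay of g2
    have hmt : (σ2 / 2) * t ≤ m t := hm t ht
    have hxm : x ≤ m t := hx.trans ((by positivity : (0:ℝ) ≤ (σ2/2)*t).trans hmt)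
    have habs : σ2 * t / 2 ≤ |x - m t| := by
      rw [abs_sub_comm, abs_of_nonneg (by linarith)]
      linarith
    have key : C * min δ1 δ2 * min |σ1| σ2 * t / 2 ≤ C * δ2 * |x - m t| := by
      have h1 : C * min δ1 δ2 * min |σ1| σ2 * t / 2 ≤ C * δ2 * σ2 * t / 2 := by
        gcongr
        · exact min_le_right _ _
        · exact min_le_right _ _
      have h2 : C * δ2 * σ2 * t / 2 ≤ C * δ2 * |x - m t| := by
        have : C * δ2 * σ2 * t / 2 = C * δ2 * (σ2 * t / 2) := by ring
        rw [this]
        gcongr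
      linarith
    have h2 : |g2 t x| ≤ C * δ2 * E := by
      refine (hg2a t x hxm).trans ?_
      gcongr
      exact Real.exp_le_exp.mpr (by linarith)
    have h1 : |g1 (x - s t)| ≤ C * δ1 ^ 2 := by
      refine (hg1 (x - s t)).trans ?_
      have h1' : Real.exp (-C * δ1 * |x - s t|) ≤ 1 := by
        refine Real.exp_le_one_iff.mpr ?_
        have := mul_nonneg (mul_nonneg hC.le hδ1.le) (abs_nonneg (x - s t))
        linarith
      exact mul_le_of_le_one_right (by positivity) h1'
    calc |g1 (x - s t)| * |g2 t x| ≤ (C * δ1 ^ 2) * (C * δ2 * E) :=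
          mul_le_mul h1 h2 (abs_nonneg _) (by positivity)
      _ = C ^ 2 * δ1 ^ 2 * δ2 * E := by ring
  · -- x ≥ 0 : use decay of g1
    have hst : s t ≤ -(|σ1| / 2) * t := hs t ht
    have hξ : |σ1| * t / 2 ≤ |x - s t| := by
      have hst0 : s t ≤ 0 := by nlinarith [mul_pos hσ1' ht]
      rw [abs_of_nonneg (show (0:ℝ) ≤ x - s t by linarith)]
      nlinarith
    have key : C * min δ1 δ2 * min |σ1| σ2 * t / 2 ≤ C * δ1 * |x - s t| := by
      have h1 : C * min δ1 δ2 * min |σ1| σ2 * t / 2 ≤ C * δ1 * |σ1| * t / 2 := by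
        gcongr
        · exact min_le_left _ _
        · exact min_le_left _ _
      have h2 : C * δ1 * |σ1| * t / 2 ≤ C * δ1 * |x - s t| := by
        have : C * δ1 * |σ1| * t / 2 = C * δ1 * (|σ1| * t / 2) := by ring
        rw [this]
        gcongr
      linarith
    have h1 : |g1 (x - s t)| ≤ C * δ1 ^ 2 * E := by
      refine (hg1 (x - s t)).trans ?_
      gcongr
      exact Real.exp_le_exp.mpr (by linarith)
    have h2 : |g2 t x| ≤ C * δ2 := by
      rcases le_total x (m t) with h | h
      · refine (hg2a t x h).trans ?_
        have h2' : Real.exp (-C * δ2 * |x - m t|) ≤ 1 := by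
          refine Real.exp_le_one_iff.mpr ?_
          have := mul_nonneg (mul_nonneg hC.le hδ2.le) (abs_nonneg (x - m t))
          linarith
        exact mul_le_of_le_one_right (by positivity) h2'
      · exact hg2b t x h
    calc |g1 (x - s t)| * |g2 t x| ≤ (C * δ1 ^ 2 * E) * (C * δ2) :=
          mul_le_mul h1 h2 (abs_nonneg _) (by positivity)
      _ = C ^ 2 * δ1 ^ 2 * δ2 * E := by ring
end
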